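/- Let k ≥ 1, let f_1, ..., f_k be natural numbers (cluster lengths), let d_1, ..., d_{k−1} be positive integers (gap parameters), and let x, y be natural numbers with d_1 + ... + d_{k−1} = x + y. For each i let U_i, D_i, U'_i, D'_i be subsets of [f_i] with U_i ∪ D_i = U'_i ∪ D'_i = [f_i], U_i ∩ D_i = U'_i ∩ D'_i, and |U_i| = |U'_i| (hence |D_i| = |D'_i|). For a positive integer N define offsets o_1(N) := 0 and o_{i+1}(N) := o_i(N) + f_i + N·d_i, put n := f_1 + ... + f_k, and define the global sets U(N) := ⋃_i (o_i(N) + U_i), D(N) := ⋃_i (o_i(N) + D_i), U'(N) := ⋃_i (o_i(N) + U'_i), D'(N) := ⋃_i (o_i(N) + D'_i), all subsets of [Nx + Ny + n]. Then the limit as N → ∞ of (∑_{S ⊆ C(N), |S| = Ny} Δ(U(N)∪S)·Δ(D(N)∪S)) / (∑_{S ⊆ C(N), |S| = Ny} Δ(U'(N)∪S)·Δ(D'(N)∪S)), where C(N) := [Nx+Ny+n]∖(U(N)∪D(N)), equals ∏_{i=1}^{k} Δ(U_i)·Δ(D_i) / (Δ(U'_i)·Δ(D'_i)). (This is the asymptotic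 shuffling corollary: the ratio of tiling numbers M(H_{Nx,Ny}(C_1,...,C_k; Nd_1,...,Nd_{k−1})) / M(H_{Nx,Ny}(C'_1,...,C'_k; Nd_1,...,Nd_{k−1})) tends to ∏_i s⁺(C_i)s⁻(C_i)/(s⁺(C'_i)s⁻(C'_i)), the tiling number of a doubly-dented hexagon being given by the displayed sum over S divided by Δ([u+Ny])Δ([d+Ny]).) -/
import Mathlib


open Finset

/-- Vandermonde product `Δ(T) = ∏_{i<j in T} (t_j - t_i)` of a finite set of naturals. -/
def vdm (T : Finset ℕ) : ℤ :=
  ∏ p ∈ (T ×ˢ T).filter (fun p => p.1 < p.2), ((p.2 : ℤ) - (p.1 : ℤ))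

/-- The offset of the `i`-th cluster (0-indexed): `o_{i+1}(N) = o_i(N) + f_i + N·d_i`. -/
def offs (f g : ℕ → ℕ) (N i : ℕ) : ℕ := ∑ j ∈ Finset.range i, (f j + N * g j)

/-- The global position set `⋃_{i<k} (o_i(N) + A_i)`. -/
def glob (k : ℕ) (f g : ℕ → ℕ) (N : ℕ) (A : ℕ → Finset ℕ) : Finset ℕ :=
  (Finset.range k).biUnion (fun i => (A i).image (fun t => offs f g N i + t))

lemma vdm_pos (T : Finset ℕ) : 0 < vdm T := by
  apply Finset.prod_pos
  intro p hp
  simp only [mem_filter] at hp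
  have : (p.1 : ℤ) < p.2 := by exact_mod_cast hp.2
  omega

def aP (A B : Finset ℕ) : ℤ := ∏ a ∈ A, ∏ b ∈ B, |(b : ℤ) - (a : ℤ)|

lemma aP_pos {A B : Finset ℕ} (h : Disjoint A B) : 0 < aP A B := by
  apply Finset.prod_pos; intro a ha
  apply Finset.prod_pos; intro b hb
  have : a ≠ b := fun e => Finset.disjoint_left.mp h ha (e ▸ hb)
  have : (b : ℤ) ≠ a := by exact_mod_cast this.symm
  simpa [abs_pos, sub_ne_zero] using this

private lemma hdpair : ∀ (s t u v : Finset ℕ), Disjoint s u ∨ Disjoint t v →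
    Disjoint ((s ×ˢ t).filter (fun p : ℕ × ℕ => p.1 < p.2))
      ((u ×ˢ v).filter (fun p => p.1 < p.2)) := by
  intro s t u v hd
  rw [Finset.disjoint_left]
  rintro p hp hq
  simp only [mem_filter, mem_product] at hp hq
  rcases hd with hd | hd
  · exact Finset.disjoint_left.mp hd hp.1.1 hq.1.1
  · exact Finset.disjoint_left.mp hd hp.1.2 hq.1.2

lemma vdm_union {A B : Finset ℕ} (h : Disjoint A B) :
    vdm (A ∪ B) = vdm A * vdm B * aP A B := by
  classical
  unfold vdm
  have hprod : (A ∪ B) ×ˢ (A ∪ B) = (A ×ˢ A ∪ B ×ˢ B) ∪ (A ×ˢ B ∪ B ×ˢ A) := by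
    rw [Finset.union_product, Finset.product_union, Finset.product_union]
    ext p; simp only [mem_union]; tauto
  have e1 : aP A B =
      (∏ p ∈ (A ×ˢ B).filter (fun p => p.1 < p.2), ((p.2 : ℤ) - p.1)) *
      (∏ p ∈ (B ×ˢ A).filter (fun p => p.1 < p.2), ((p.2 : ℤ) - p.1)) := by
    have swap : (∏ p ∈ (B ×ˢ A).filter (fun p => p.1 < p.2), ((p.2 : ℤ) - p.1)) =
        ∏ p ∈ (A ×ˢ B).filter (fun p => p.2 < p.1), |(p.2 : ℤ) - p.1| := by
      apply Finset.prod_nbij' Prod.swap Prod.swap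
      · intro p hp; simp only [mem_filter, mem_product, Prod.fst_swap, Prod.snd_swap] at *; tauto
      · intro p hp; simp only [mem_filter, mem_product, Prod.fst_swap, Prod.snd_swap] at *; tauto
      · intros; simp
      · intros; simp
      · intro p hp
        simp only [mem_filter, mem_product, Prod.fst_swap, Prod.snd_swap] at *
        have : (p.1 : ℤ) < p.2 := by exact_mod_cast hp.2
        rw [abs_of_neg (by omega : (p.1:ℤ) - p.2 < 0)]; ring
    rw [swap]
    have hAB : aP A B = ∏ p ∈ A ×ˢ B, |(p.2 : ℤ) - p.1| := (Finset.prod_product' A B _).symm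
    have hsplit : A ×ˢ B = (A ×ˢ B).filter (fun p => p.1 < p.2) ∪
        (A ×ˢ B).filter (fun p => p.2 < p.1) := by
      ext p
      simp only [mem_union, mem_filter, mem_product]
      constructor
      · intro hp
        have : p.1 ≠ p.2 := fun e => Finset.disjoint_left.mp h hp.1 (e ▸ hp.2)
        rcases this.lt_or_gt with h' | h' <;> tauto
      · tauto
    have hdisj : Disjoint ((A ×ˢ B).filter (fun p : ℕ × ℕ => p.1 < p.2))
        ((A ×ˢ B).filter (fun p => p.2 < p.1)) := by
      rw [Finset.disjoint_left]; rintro p hp hq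
      simp only [mem_filter] at hp hq; omega
    rw [hAB]
    conv_lhs => rw [hsplit]
    rw [Finset.prod_union hdisj]
    congr 1
    apply Finset.prod_congr rfl
    intro p hp
    simp only [mem_filter] at hp
    have : (p.1 : ℤ) < p.2 := by exact_mod_cast hp.2
    rw [abs_of_pos (by omega)]
  rw [hprod, filter_union, filter_union, filter_union,
    Finset.prod_union ?d1, Finset.prod_union ?d2, Finset.prod_union ?d3, e1]
  case d2 => exact hdpair A A B B (Or.inl h)
  case d3 => exact hdpair A B B A (Or.inl h)
  case d1 =>
    apply Finset.disjoint_union_left.mpr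
    constructor <;> apply Finset.disjoint_union_right.mpr
    · exact ⟨hdpair A A A B (Or.inr h), hdpair A A B A (Or.inl h)⟩
    · exact ⟨hdpair B B A B (Or.inl h.symm), hdpair B B B A (Or.inr h.symm)⟩

lemma vdm_image_add (c : ℕ) (T : Finset ℕ) :
    vdm (T.image (fun t => c + t)) = vdm T := by
  classical
  unfold vdm
  apply Finset.prod_nbij' (fun p => (p.1 - c, p.2 - c)) (fun p => (c + p.1, c + p.2))
  · intro p hp
    simp only [mem_filter, mem_product, mem_image] at *
    obtain ⟨⟨⟨a, ha, h1⟩, ⟨b, hb, h2⟩⟩, hlt⟩ := hp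
    have e1 : p.1 - c = a := by omega
    have e2 : p.2 - c = b := by omega
    rw [e1, e2]
    exact ⟨⟨ha, hb⟩, by omega⟩
  · intro p hp
    simp only [mem_filter, mem_product, mem_image] at *
    exact ⟨⟨⟨p.1, hp.1.1, rfl⟩, ⟨p.2, hp.1.2, rfl⟩⟩, by omega⟩
  · intro p hp
    simp only [mem_filter, mem_product, mem_image] at hp
    obtain ⟨⟨⟨a, ha, h1⟩, ⟨b, hb, h2⟩⟩, hlt⟩ := hp
    rw [Prod.ext_iff]
    constructor <;> (simp only []; omega)
  · intro p hp; simp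
  · intro p hp
    simp only [mem_filter, mem_product, mem_image] at hp
    obtain ⟨⟨⟨a, ha, h1⟩, ⟨b, hb, h2⟩⟩, hlt⟩ := hp
    have c1 : c ≤ p.1 := by omega
    have c2 : c ≤ p.2 := by omega
    simp only []
    push_cast [Nat.cast_sub c1, Nat.cast_sub c2]
    ring

lemma aP_ordered {A B : Finset ℕ} (h : ∀ a ∈ A, ∀ b ∈ B, a < b) :
    aP A B = ∏ a ∈ A, ∏ b ∈ B, ((b : ℤ) - a) := by
  unfold aP
  apply Finset.prod_congr rfl
  intro a ha
  apply Finset.prod_congr rfl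
  intro b hb
  have : (a : ℤ) < b := by exact_mod_cast h a ha b hb
  rw [abs_of_pos (by omega)]

section globs
variable (f g : ℕ → ℕ) (N : ℕ)

lemma offs_succ (i : ℕ) : offs f g N (i + 1) = offs f g N i + (f i + N * g i) :=
  Finset.sum_range_succ _ i

lemma offs_le_offs {i j : ℕ} (h : i ≤ j) : offs f g N i ≤ offs f g N j :=
  Finset.sum_le_sum_of_subset (Finset.range_subset_range.mpr h)

lemma offs_add_le {i j : ℕ} (h : i < j) : offs f g N i + f i ≤ offs f g N j := by
  have h1 := offs_le_offs f g N (Nat.succ_le_of_lt h)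
  rw [offs_succ] at h1
  omega

lemma mem_image_offs {A : Finset ℕ} {i fi x : ℕ} (hA : A ⊆ Finset.Icc 1 fi)
    (hx : x ∈ A.image (fun t => offs f g N i + t)) :
    offs f g N i < x ∧ x ≤ offs f g N i + fi := by
  simp only [mem_image] at hx
  obtain ⟨t, ht, rfl⟩ := hx
  have := Finset.mem_Icc.mp (hA ht)
  omega

variable {k : ℕ} {F : ℕ → ℕ} {A B : ℕ → Finset ℕ}

lemma glob_lt {Ai Bj : Finset ℕ} {i j a b : ℕ}
    (hA : Ai ⊆ Finset.Icc 1 (f i)) (hB : Bj ⊆ Finset.Icc 1 (f j)) (hij : i < j)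
    (ha : a ∈ Ai.image (fun t => offs f g N i + t))
    (hb : b ∈ Bj.image (fun t => offs f g N j + t)) : a < b := by
  have h1 := mem_image_offs f g N hA ha
  have h2 := mem_image_offs f g N hB hb
  have h3 := offs_add_le f g N hij
  omega

lemma glob_pairwiseDisjoint (hA : ∀ i < k, A i ⊆ Finset.Icc 1 (f i)) :
    (↑(Finset.range k) : Set ℕ).PairwiseDisjoint
      (fun i => (A i).image (fun t => offs f g N i + t)) := by
  intro i hi j hj hij
  simp only [Finset.coe_range, Set.mem_Iio] at hi hj
  simp only [Function.onFun]
  rw [Finset.disjoint_left]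
  intro x hx hx'
  rcases hij.lt_or_gt with h | h
  · exact absurd rfl (glob_lt f g N (hA i hi) (hA j hj) h hx hx').ne
  · exact absurd rfl (glob_lt f g N (hA j hj) (hA i hi) h hx' hx).ne

lemma card_glob (hA : ∀ i < k, A i ⊆ Finset.Icc 1 (f i)) :
    (glob k f g N A).card = ∑ i ∈ Finset.range k, (A i).card := by
  rw [glob, Finset.card_biUnion]
  · apply Finset.sum_congr rfl
    intro i _
    exact Finset.card_image_of_injective _ (fun a b => by omega)
  · intro i hi j hj hij
    exact glob_pairwiseDisjoint f g N hA (by simpa using hi) (by simpa using hj) hij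

lemma glob_union : glob k f g N (fun i => A i ∪ B i) = glob k f g N A ∪ glob k f g N B := by
  ext x
  simp only [glob, mem_biUnion, mem_union]
  constructor
  · rintro ⟨i, hi, hx⟩
    rw [Finset.image_union] at hx
    rcases Finset.mem_union.mp hx with h | h
    · exact Or.inl ⟨i, hi, h⟩
    · exact Or.inr ⟨i, hi, h⟩
  · rintro (⟨i, hi, hx⟩ | ⟨i, hi, hx⟩) <;> exact ⟨i, hi, by
      rw [Finset.image_union]; simp only [mem_union]; tauto⟩

lemma glob_inter (hA : ∀ i < k, A i ⊆ Finset.Icc 1 (f i))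
    (hB : ∀ i < k, B i ⊆ Finset.Icc 1 (f i)) :
    glob k f g N (fun i => A i ∩ B i) = glob k f g N A ∩ glob k f g N B := by
  ext x
  simp only [glob, mem_biUnion, mem_inter]
  constructor
  · rintro ⟨i, hi, hx⟩
    simp only [mem_image, mem_inter] at hx
    obtain ⟨t, ⟨ht1, ht2⟩, rfl⟩ := hx
    exact ⟨⟨i, hi, mem_image_of_mem _ ht1⟩, ⟨i, hi, mem_image_of_mem _ ht2⟩⟩
  · rintro ⟨⟨i, hi, hx1⟩, ⟨j, hj, hx2⟩⟩
    rw [Finset.mem_range] at hi hj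
    have hij : i = j := by
      by_contra hne
      rcases Ne.lt_or_gt hne with h | h
      · exact absurd rfl (glob_lt f g N (hA i hi) (hB j hj) h hx1 hx2).ne
      · exact absurd rfl (glob_lt f g N (hB j hj) (hA i hi) h hx2 hx1).ne
    subst hij
    refine ⟨i, Finset.mem_range.mpr hi, ?_⟩
    simp only [mem_image, mem_inter] at hx1 hx2 ⊢
    obtain ⟨t, ht, rfl⟩ := hx1
    obtain ⟨s, hs, hse⟩ := hx2
    have : s = t := by omega
    exact ⟨t, ⟨ht, this ▸ hs⟩, rfl⟩

lemma glob_subset (h : ∀ i < k, A i ⊆ B i) : glob k f g N A ⊆ glob k f g N B := by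
  intro x hx
  simp only [glob, mem_biUnion] at hx ⊢
  obtain ⟨i, hi, hx⟩ := hx
  exact ⟨i, hi, Finset.image_subset_image (h i (by simpa using hi)) hx⟩

end globs

lemma disjoint_glob_image (f g : ℕ → ℕ) (N : ℕ) {k : ℕ} {A : ℕ → Finset ℕ}
    (hA : ∀ i < k + 1, A i ⊆ Finset.Icc 1 (f i)) :
    Disjoint (glob k f g N A) ((A k).image (fun t => offs f g N k + t)) := by
  rw [Finset.disjoint_left]
  intro x hx hx'
  simp only [glob, mem_biUnion, Finset.mem_range] at hx
  obtain ⟨i, hi, hxi⟩ := hx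
  exact absurd rfl (glob_lt f g N (hA i (by omega)) (hA k (by omega)) hi hxi hx').ne

lemma glob_succ (f g : ℕ → ℕ) (N k : ℕ) (A : ℕ → Finset ℕ) :
    glob (k + 1) f g N A = glob k f g N A ∪ (A k).image (fun t => offs f g N k + t) := by
  rw [glob, Finset.range_add_one, Finset.biUnion_insert, Finset.union_comm]
  rfl

lemma vdm_glob (f g : ℕ → ℕ) (N : ℕ) {k : ℕ} {A : ℕ → Finset ℕ}
    (hA : ∀ i < k, A i ⊆ Finset.Icc 1 (f i)) :
    vdm (glob k f g N A) = (∏ i ∈ Finset.range k, vdm (A i)) *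
      ∏ j ∈ Finset.range k, ∏ i ∈ Finset.range j, ∏ a ∈ A i, ∏ b ∈ A j,
        ((offs f g N j : ℤ) + b - ((offs f g N i : ℤ) + a)) := by
  induction k with
  | zero => simp [glob, vdm]
  | succ k ih =>
    have hA' : ∀ i < k, A i ⊆ Finset.Icc 1 (f i) := fun i hi => hA i (by omega)
    rw [glob_succ, vdm_union (disjoint_glob_image f g N hA), ih hA', vdm_image_add]
    have hcross : aP (glob k f g N A) ((A k).image (fun t => offs f g N k + t)) =
        ∏ i ∈ Finset.range k, ∏ a ∈ A i, ∏ b ∈ A k,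
          ((offs f g N k : ℤ) + b - ((offs f g N i : ℤ) + a)) := by
      rw [aP_ordered (fun a ha b hb => by
        simp only [glob, mem_biUnion, Finset.mem_range] at ha
        obtain ⟨i, hi, hai⟩ := ha
        exact glob_lt f g N (hA' i hi) (hA k (by omega)) hi hai hb)]
      rw [glob, Finset.prod_biUnion (glob_pairwiseDisjoint f g N hA')]
      apply Finset.prod_congr rfl
      intro i hi
      rw [Finset.prod_image (fun a _ b _ h => by omega)]
      apply Finset.prod_congr rfl
      intro a ha
      rw [Finset.prod_image (fun a _ b _ h => by omega)]
      apply Finset.prod_congr rfl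
      intro b hb
      push_cast
      ring
    rw [hcross, Finset.prod_range_succ, Finset.prod_range_succ
      (fun j => ∏ i ∈ Finset.range j, ∏ a ∈ A i, ∏ b ∈ A j,
        ((offs f g N j : ℤ) + b - ((offs f g N i : ℤ) + a)))]
    ring

lemma sum_factor (U D C : Finset ℕ) (m : ℕ) (hU : Disjoint U C) (hD : Disjoint D C) :
    ∑ S ∈ C.powersetCard m, vdm (U ∪ S) * vdm (D ∪ S) =
      vdm U * vdm D *
        ∑ S ∈ C.powersetCard m, vdm S * vdm S * (aP (U ∪ D) S * aP (U ∩ D) S) := by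
  rw [Finset.mul_sum]
  apply Finset.sum_congr rfl
  intro S hS
  have hSC : S ⊆ C := (Finset.mem_powersetCard.mp hS).1
  rw [vdm_union (hU.mono_right hSC), vdm_union (hD.mono_right hSC)]
  have h1 : aP (U ∪ D) S * aP (U ∩ D) S = aP U S * aP D S :=
    Finset.prod_union_inter
  rw [h1]; ring

lemma sum_pos' (U D C : Finset ℕ) (m : ℕ) (hUDC : Disjoint (U ∪ D) C)
    (hne : (C.powersetCard m).Nonempty) :
    0 < ∑ S ∈ C.powersetCard m, vdm S * vdm S * (aP (U ∪ D) S * aP (U ∩ D) S) := by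
  apply Finset.sum_pos _ hne
  intro S hS
  have hSC : S ⊆ C := (Finset.mem_powersetCard.mp hS).1
  have d1 : Disjoint (U ∪ D) S := hUDC.mono_right hSC
  have d2 : Disjoint (U ∩ D) S := d1.mono_left (Finset.inter_subset_union)
  have := vdm_pos S
  have := aP_pos d1
  have := aP_pos d2
  positivity

open Filter in
lemma tendsto_ratio_one {G : ℕ} (hG : 0 < G) (c : ℝ) :
    Tendsto (fun N : ℕ => ((N : ℝ) * G + c) / ((N : ℝ) * G)) atTop (nhds 1) := by
  have h1 : Tendsto (fun N : ℕ => (N : ℝ) * G) atTop atTop := by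
    apply Filter.Tendsto.atTop_mul_const (by exact_mod_cast hG)
    exact tendsto_natCast_atTop_atTop
  have h2 : Tendsto (fun N : ℕ => 1 + c / ((N : ℝ) * G)) atTop (nhds 1) := by
    have := Filter.Tendsto.div_atTop (tendsto_const_nhds (x := c)) h1
    simpa using tendsto_const_nhds.add this
  apply h2.congr'
  filter_upwards [Filter.eventually_ge_atTop 1] with N hN
  have hne : (N : ℝ) * G ≠ 0 := by
    have : (1:ℝ) ≤ (N:ℝ) := by exact_mod_cast hN
    positivity
  field_simp

def crossZ (f g : ℕ → ℕ) (N : ℕ) (A B : Finset ℕ) (i j : ℕ) : ℤ :=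
  ∏ a ∈ A, ∏ b ∈ B, ((offs f g N j : ℤ) + b - ((offs f g N i : ℤ) + a))

open Filter in
lemma crossZ_tendsto (f g : ℕ → ℕ) (A B : Finset ℕ) {i j : ℕ} (hij : i < j)
    (hgi : 0 < g i) :
    Tendsto (fun N : ℕ => ((crossZ f g N A B i j : ℤ) : ℝ) /
        ((N : ℝ) * (∑ l ∈ Finset.Ico i j, g l)) ^ (A.card * B.card)) atTop
      (nhds 1) := by
  set G : ℕ := ∑ l ∈ Finset.Ico i j, g l with hGdef
  have hG : 0 < G := by
    apply Finset.sum_pos' (fun l _ => Nat.zero_le _)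
    exact ⟨i, Finset.mem_Ico.mpr ⟨le_refl i, hij⟩, hgi⟩
  set F : ℕ := ∑ l ∈ Finset.Ico i j, f l with hFdef
  have hoffs : ∀ N : ℕ, ((offs f g N j : ℕ) : ℝ) = (offs f g N i : ℝ) + F + N * G := by
    intro N
    have := Finset.sum_Ico_consecutive (fun l => f l + N * g l) (Nat.zero_le i) hij.le
    simp only [← Finset.range_eq_Ico] at this
    have h2 : offs f g N j = offs f g N i + ∑ l ∈ Finset.Ico i j, (f l + N * g l) := by
      rw [offs, offs, ← this]
    rw [h2, hGdef, hFdef]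
    push_cast [Finset.sum_add_distrib, ← Finset.mul_sum]
    ring
  have key : ∀ N : ℕ, ((crossZ f g N A B i j : ℤ) : ℝ) /
      ((N : ℝ) * G) ^ (A.card * B.card) =
      ∏ a ∈ A, ∏ b ∈ B, (((N : ℝ) * G + ((F : ℝ) + b - a)) / ((N : ℝ) * G)) := by
    intro N
    simp only [Finset.prod_div_distrib, Finset.prod_const, ← pow_mul]
    rw [mul_comm B.card A.card]
    congr 1
    rw [crossZ]
    push_cast
    apply Finset.prod_congr rfl (fun a _ => ?_)
    apply Finset.prod_congr rfl (fun b _ => ?_)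
    rw [hoffs N]
    ring
  apply Filter.Tendsto.congr (fun N => (key N).symm)
  have := tendsto_finset_prod (f := fun (a : ℕ) (N : ℕ) =>
      ∏ b ∈ B, (((N : ℝ) * G + ((F : ℝ) + b - a)) / ((N : ℝ) * G)))
    (a := fun _ => (1 : ℝ)) (x := Filter.atTop) A (fun a _ => by
      have := tendsto_finset_prod (f := fun (b : ℕ) (N : ℕ) =>
          (((N : ℝ) * G + ((F : ℝ) + b - a)) / ((N : ℝ) * G)))
        (a := fun _ => (1 : ℝ)) (x := Filter.atTop) B (fun b _ =>
          tendsto_ratio_one hG ((F : ℝ) + b - a))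
      simpa using this)
  simpa using this

lemma div_div_same' {c : ℝ} (hc : c ≠ 0) (X Y : ℝ) : (X / c) / (Y / c) = X / Y := by
  rcases eq_or_ne Y 0 with rfl | hY
  · simp
  · field_simp

open Filter in
lemma pair_tendsto (f g : ℕ → ℕ) {i j : ℕ} (hij : i < j) (hgi : 0 < g i)
    (U1 U2 D1 D2 U1' U2' D1' D2' : Finset ℕ)
    (hU1 : U1.card = U1'.card) (hU2 : U2.card = U2'.card)
    (hD1 : D1.card = D1'.card) (hD2 : D2.card = D2'.card) :
    Tendsto (fun N : ℕ =>
        ((crossZ f g N U1 U2 i j * crossZ f g N D1 D2 i j : ℤ) : ℝ) /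
        ((crossZ f g N U1' U2' i j * crossZ f g N D1' D2' i j : ℤ) : ℝ))
      atTop (nhds 1) := by
  set G : ℕ := ∑ l ∈ Finset.Ico i j, g l with hGdef
  have hG : 0 < G := by
    apply Finset.sum_pos' (fun l _ => Nat.zero_le _)
    exact ⟨i, Finset.mem_Ico.mpr ⟨le_refl i, hij⟩, hgi⟩
  have h1 := crossZ_tendsto f g U1 U2 hij hgi
  have h2 := crossZ_tendsto f g D1 D2 hij hgi
  have h3 := crossZ_tendsto f g U1' U2' hij hgi
  have h4 := crossZ_tendsto f g D1' D2' hij hgi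
  rw [← hU1, ← hU2] at h3
  rw [← hD1, ← hD2] at h4
  rw [← hGdef] at h1 h2 h3 h4
  have hdiv := Filter.Tendsto.div ((h1.mul h2)) ((h3.mul h4)) (by norm_num)
  have : ((1:ℝ) * 1) / (1 * 1) = 1 := by norm_num
  rw [this] at hdiv
  apply hdiv.congr'
  filter_upwards [Filter.eventually_ge_atTop 1] with N hN
  have hNG : (N : ℝ) * G ≠ 0 := by
    have h1 : (1:ℝ) ≤ (N:ℝ) := by exact_mod_cast hN
    have h2 : (0:ℝ) < (G:ℝ) := by exact_mod_cast hG
    positivity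
  have hp : ((N : ℝ) * G) ^ (U1.card * U2.card) ≠ 0 := pow_ne_zero _ hNG
  have hq : ((N : ℝ) * G) ^ (D1.card * D2.card) ≠ 0 := pow_ne_zero _ hNG
  simp only [Pi.div_apply]
  rw [div_mul_div_comm, div_mul_div_comm,
    div_div_same' (by exact mul_ne_zero hp hq)]
  push_cast
  ring_nf

lemma glob_congr {k N : ℕ} {f g : ℕ → ℕ} {A B : ℕ → Finset ℕ}
    (h : ∀ i < k, A i = B i) : glob k f g N A = glob k f g N B := by
  unfold glob
  apply Finset.biUnion_congr rfl
  intro i hi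
  rw [h i (Finset.mem_range.mp hi)]

/-- **Asymptotic shuffling corollary**: as `N → ∞`, the ratio of tiling numbers
`M(H_{Nx,Ny}(C_1,…,C_k; Nd_1,…,Nd_{k-1})) / M(H_{Nx,Ny}(C'_1,…,C'_k; Nd_1,…,Nd_{k-1}))`
tends to `∏_i s⁺(C_i)s⁻(C_i)/(s⁺(C'_i)s⁻(C'_i))`. -/
theorem asymptotic_shuffling (k : ℕ) (hk : 1 ≤ k) (f g : ℕ → ℕ) (x y : ℕ)
    (Uc Dc Uc' Dc' : ℕ → Finset ℕ)
    (hg : ∀ i < k - 1, 0 < g i) (hsum : ∑ i ∈ Finset.range (k - 1), g i = x + y)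
    (hUD : ∀ i < k, Uc i ∪ Dc i = Finset.Icc 1 (f i))
    (hUD' : ∀ i < k, Uc' i ∪ Dc' i = Finset.Icc 1 (f i))
    (hcap : ∀ i < k, Uc i ∩ Dc i = Uc' i ∩ Dc' i)
    (hcard : ∀ i < k, (Uc i).card = (Uc' i).card) :
    Filter.Tendsto (fun N : ℕ =>
      ((∑ S ∈ (Finset.Icc 1 (N * x + N * y + ∑ i ∈ Finset.range k, f i) \
            (glob k f g N Uc ∪ glob k f g N Dc)).powersetCard (N * y),
          vdm (glob k f g N Uc ∪ S) * vdm (glob k f g N Dc ∪ S) : ℤ) : ℝ) /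
      ((∑ S ∈ (Finset.Icc 1 (N * x + N * y + ∑ i ∈ Finset.range k, f i) \
            (glob k f g N Uc ∪ glob k f g N Dc)).powersetCard (N * y),
          vdm (glob k f g N Uc' ∪ S) * vdm (glob k f g N Dc' ∪ S) : ℤ) : ℝ))
      Filter.atTop
      (nhds (∏ i ∈ Finset.range k,
        ((vdm (Uc i) * vdm (Dc i) : ℤ) : ℝ) / ((vdm (Uc' i) * vdm (Dc' i) : ℤ) : ℝ))) := by
  classical
  have hUsub : ∀ i < k, Uc i ⊆ Finset.Icc 1 (f i) := fun i hi =>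
    (hUD i hi) ▸ Finset.subset_union_left
  have hDsub : ∀ i < k, Dc i ⊆ Finset.Icc 1 (f i) := fun i hi =>
    (hUD i hi) ▸ Finset.subset_union_right
  have hU'sub : ∀ i < k, Uc' i ⊆ Finset.Icc 1 (f i) := fun i hi =>
    (hUD' i hi) ▸ Finset.subset_union_left
  have hD'sub : ∀ i < k, Dc' i ⊆ Finset.Icc 1 (f i) := fun i hi =>
    (hUD' i hi) ▸ Finset.subset_union_right
  have hDcard : ∀ i < k, (Dc i).card = (Dc' i).card := by
    intro i hi
    have h1 := Finset.card_union_add_card_inter (Uc i) (Dc i)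
    have h2 := Finset.card_union_add_card_inter (Uc' i) (Dc' i)
    rw [hUD i hi, hcap i hi] at h1
    rw [hUD' i hi] at h2
    have := hcard i hi
    omega
  -- the common outer set and its properties
  set n : ℕ := ∑ i ∈ Finset.range k, f i with hn
  have hEglob : ∀ N : ℕ, glob k f g N Uc ∪ glob k f g N Dc =
      glob k f g N (fun i => Finset.Icc 1 (f i)) := by
    intro N
    rw [← glob_union]
    exact glob_congr (fun i hi => hUD i hi)
  have hEglob' : ∀ N : ℕ, glob k f g N Uc' ∪ glob k f g N Dc' =
      glob k f g N (fun i => Finset.Icc 1 (f i)) := by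
    intro N
    rw [← glob_union]
    exact glob_congr (fun i hi => hUD' i hi)
  have hEeq : ∀ N : ℕ, glob k f g N Uc' ∪ glob k f g N Dc' =
      glob k f g N Uc ∪ glob k f g N Dc := by
    intro N; rw [hEglob, hEglob']
  have hIeq : ∀ N : ℕ, glob k f g N Uc' ∩ glob k f g N Dc' =
      glob k f g N Uc ∩ glob k f g N Dc := by
    intro N
    rw [← glob_inter f g N hU'sub hD'sub, ← glob_inter f g N hUsub hDsub]
    exact glob_congr (fun i hi => (hcap i hi).symm)
  have hEsub : ∀ N : ℕ, glob k f g N (fun i => Finset.Icc 1 (f i)) ⊆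
      Finset.Icc 1 (N * x + N * y + n) := by
    intro N z hz
    simp only [glob, mem_biUnion, mem_image, Finset.mem_range] at hz
    obtain ⟨i, hi, t, ht, rfl⟩ := hz
    have ht' := Finset.mem_Icc.mp ht
    rw [Finset.mem_Icc]
    constructor
    · omega
    · have h2 : offs f g N i = (∑ j ∈ Finset.range i, f j) +
          N * ∑ j ∈ Finset.range i, g j := by
        rw [offs, Finset.sum_add_distrib, Finset.mul_sum]
      have h3 : (∑ j ∈ Finset.range i, f j) + f i ≤ n := by
        rw [hn, ← Finset.sum_range_succ]
        exact Finset.sum_le_sum_of_subset (Finset.range_subset_range.mpr (by omega))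
      have h4 : ∑ j ∈ Finset.range i, g j ≤ x + y := by
        rw [← hsum]
        exact Finset.sum_le_sum_of_subset (Finset.range_subset_range.mpr (by omega))
      have h5 : N * ∑ j ∈ Finset.range i, g j ≤ N * (x + y) :=
        Nat.mul_le_mul_left N h4
      have h6 : N * (x + y) = N * x + N * y := by ring
      omega
  have hne : ∀ N : ℕ, ((Finset.Icc 1 (N * x + N * y + n) \
      (glob k f g N Uc ∪ glob k f g N Dc)).powersetCard (N * y)).Nonempty := by
    intro N
    rw [Finset.powersetCard_nonempty]
    rw [hEglob N, Finset.card_sdiff_of_subset (hEsub N)]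
    have hcardE : (glob k f g N (fun i => Finset.Icc 1 (f i))).card = n := by
      rw [card_glob f g N (fun i _ => subset_refl _)]
      simp [hn]
    rw [hcardE, Nat.card_Icc]
    omega
  set Sig : ℕ → ℤ := fun N => ∑ S ∈ (Finset.Icc 1 (N * x + N * y + n) \
      (glob k f g N Uc ∪ glob k f g N Dc)).powersetCard (N * y),
      vdm S * vdm S * (aP ((glob k f g N Uc ∪ glob k f g N Dc)) S *
        aP ((glob k f g N Uc ∩ glob k f g N Dc)) S) with hSigdef
  have hCd : ∀ N : ℕ, Disjoint (glob k f g N Uc ∪ glob k f g N Dc)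
      (Finset.Icc 1 (N * x + N * y + n) \ (glob k f g N Uc ∪ glob k f g N Dc)) :=
    fun N => Finset.disjoint_sdiff
  have hSigpos : ∀ N : ℕ, 0 < Sig N := fun N =>
    sum_pos' _ _ _ _ (hCd N) (hne N)
  have hnum : ∀ N : ℕ, (∑ S ∈ (Finset.Icc 1 (N * x + N * y + n) \
        (glob k f g N Uc ∪ glob k f g N Dc)).powersetCard (N * y),
        vdm (glob k f g N Uc ∪ S) * vdm (glob k f g N Dc ∪ S)) =
      vdm (glob k f g N Uc) * vdm (glob k f g N Dc) * Sig N := by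
    intro N
    exact sum_factor _ _ _ _ ((hCd N).mono_left Finset.subset_union_left)
      ((hCd N).mono_left Finset.subset_union_right)
  have hden : ∀ N : ℕ, (∑ S ∈ (Finset.Icc 1 (N * x + N * y + n) \
        (glob k f g N Uc ∪ glob k f g N Dc)).powersetCard (N * y),
        vdm (glob k f g N Uc' ∪ S) * vdm (glob k f g N Dc' ∪ S)) =
      vdm (glob k f g N Uc') * vdm (glob k f g N Dc') * Sig N := by
    intro N
    have h1 := sum_factor (glob k f g N Uc') (glob k f g N Dc')
      (Finset.Icc 1 (N * x + N * y + n) \ (glob k f g N Uc ∪ glob k f g N Dc)) (N * y)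
      ((hCd N).mono_left ((hEeq N) ▸ Finset.subset_union_left))
      ((hCd N).mono_left ((hEeq N) ▸ Finset.subset_union_right))
    rw [hEeq N, hIeq N] at h1
    exact h1
  set X : ℕ → ℝ := fun N => ∏ j ∈ Finset.range k, ∏ i ∈ Finset.range j,
      ((crossZ f g N (Uc i) (Uc j) i j * crossZ f g N (Dc i) (Dc j) i j : ℤ) : ℝ) /
      ((crossZ f g N (Uc' i) (Uc' j) i j * crossZ f g N (Dc' i) (Dc' j) i j : ℤ) : ℝ)
    with hXdef
  have hXt : Filter.Tendsto X Filter.atTop (nhds 1) := by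
    have h1 : Filter.Tendsto X Filter.atTop
        (nhds (∏ j ∈ Finset.range k, ∏ i ∈ Finset.range j, (1 : ℝ))) := by
      rw [hXdef]
      apply tendsto_finset_prod
      intro j hj
      apply tendsto_finset_prod
      intro i hi
      rw [Finset.mem_range] at hj hi
      exact pair_tendsto f g hi (hg i (by omega)) _ _ _ _ _ _ _ _
        (hcard i (by omega)) (hcard j (by omega)) (hDcard i (by omega)) (hDcard j (by omega))
    simpa using h1
  have hres := hXt.const_mul (∏ i ∈ Finset.range k,
    ((vdm (Uc i) * vdm (Dc i) : ℤ) : ℝ) / ((vdm (Uc' i) * vdm (Dc' i) : ℤ) : ℝ))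
  rw [mul_one] at hres
  refine hres.congr fun N => ?_
  have hSne : ((Sig N : ℤ) : ℝ) ≠ 0 := by
    exact_mod_cast (hSigpos N).ne'
  show (∏ i ∈ Finset.range k,
        ((vdm (Uc i) * vdm (Dc i) : ℤ) : ℝ) / ((vdm (Uc' i) * vdm (Dc' i) : ℤ) : ℝ)) * X N = _
  simp only [hXdef]
  rw [hnum N, hden N,
    vdm_glob f g N hUsub, vdm_glob f g N hDsub, vdm_glob f g N hU'sub, vdm_glob f g N hD'sub]
  push_cast
  rw [mul_div_mul_right _ _ hSne]
  simp only [crossZ]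
  push_cast
  simp only [Finset.prod_div_distrib, Finset.prod_mul_distrib]
  ring
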